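/- arXiv:1812.01394 — 2 statements merged into one kernel-verified Lean document; each statement's English description precedes it below -/
import Mathlib

section
/- Let m ≥ 1 and let λ_1, …, λ_m be nonzero, pairwise distinct real numbers, and set Λ = diag(λ_1, …, λ_m). Then for every matrix G ∈ ℝ^{m×m} there exists a unique pair of matrices (C, D) ∈ ℝ^{m×m} × ℝ^{m×m} satisfying the linear system C − Λ^{-1} Q̃(ΛC) = 0, D − Q(D) = 0, and D^T + C = G. Moreover, the unique solution is given explicitly by D_{ii} = 0, D_{ij} = (λ_i G_{ij} + λ_j G_{ji})/(λ_j − λ_i) for i ≠ j, and C = G − D^T. -/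
open Matrix

/-- `Q(M) := (M - Mᵀ)/2`. -/
noncomputable def Qop {m : ℕ} (M : Matrix (Fin m) (Fin m) ℝ) : Matrix (Fin m) (Fin m) ℝ :=
  (1 / 2 : ℝ) • (M - Mᵀ)

/-- `Q̃(M) := Q(M) + diag(M)`. -/
noncomputable def Qtop {m : ℕ} (M : Matrix (Fin m) (Fin m) ℝ) : Matrix (Fin m) (Fin m) ℝ :=
  Qop M + Matrix.diagonal (fun i => M i i)

/-- For `m ≥ 1` and nonzero pairwise distinct `λ₁, …, λ_m`, with `Λ = diag(λ)`, for every
`G ∈ ℝ^{m×m}` there is a unique pair `(C, D)` solving `C − Λ⁻¹ Q̃(ΛC) = 0`, `D − Q(D) = 0`,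
`Dᵀ + C = G`; moreover the unique solution is given by `D_{ii} = 0`,
`D_{ij} = (λ_i G_{ij} + λ_j G_{ji})/(λ_j − λ_i)` for `i ≠ j`, and `C = G − Dᵀ`. -/
theorem dybo_CD_system_unique_solution {m : ℕ} (hm : 1 ≤ m) (lam : Fin m → ℝ)
    (hnz : ∀ i, lam i ≠ 0) (hdist : Function.Injective lam)
    (G : Matrix (Fin m) (Fin m) ℝ) :
    let Λ : Matrix (Fin m) (Fin m) ℝ := Matrix.diagonal lam
    let D₀ : Matrix (Fin m) (Fin m) ℝ :=
      Matrix.of fun i j =>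
        if i = j then 0 else (lam i * G i j + lam j * G j i) / (lam j - lam i)
    (∃! p : Matrix (Fin m) (Fin m) ℝ × Matrix (Fin m) (Fin m) ℝ,
        p.1 - Λ⁻¹ * Qtop (Λ * p.1) = 0 ∧ p.2 - Qop p.2 = 0 ∧ p.2ᵀ + p.1 = G) ∧
    (∀ C D : Matrix (Fin m) (Fin m) ℝ,
        (C - Λ⁻¹ * Qtop (Λ * C) = 0 ∧ D - Qop D = 0 ∧ Dᵀ + C = G) ↔
          (D = D₀ ∧ C = G - D₀ᵀ)) := by
  intro Λ D₀
  -- Λ⁻¹ is the diagonal of inverses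
  have hΛinv : Λ⁻¹ = Matrix.diagonal (fun i => (lam i)⁻¹) := by
    apply Matrix.inv_eq_left_inv
    rw [Matrix.diagonal_mul_diagonal]
    convert Matrix.diagonal_one using 2
    funext i
    exact inv_mul_cancel₀ (hnz i)
  have hΛleft : Matrix.diagonal (fun i => (lam i)⁻¹) * Λ = 1 := by
    rw [Matrix.diagonal_mul_diagonal]
    convert Matrix.diagonal_one using 2
    funext i
    exact inv_mul_cancel₀ (hnz i)
  -- reformulate the first equation
  have hEq1 : ∀ C : Matrix (Fin m) (Fin m) ℝ,
      (C - Λ⁻¹ * Qtop (Λ * C) = 0) ↔ (Λ * C = Qtop (Λ * C)) := by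
    intro C
    rw [sub_eq_zero]
    constructor
    · intro h
      conv_lhs => rw [h]
      rw [hΛinv, ← Matrix.mul_assoc]
      have : Λ * Matrix.diagonal (fun i => (lam i)⁻¹) = 1 := by
        rw [Matrix.diagonal_mul_diagonal]
        convert Matrix.diagonal_one using 2
        funext i
        exact mul_inv_cancel₀ (hnz i)
      rw [this, Matrix.one_mul]
    · intro h
      calc C = 1 * C := (Matrix.one_mul C).symm
        _ = (Matrix.diagonal (fun i => (lam i)⁻¹) * Λ) * C := by rw [hΛleft]
        _ = Matrix.diagonal (fun i => (lam i)⁻¹) * (Λ * C) := Matrix.mul_assoc _ _ _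
        _ = Λ⁻¹ * Qtop (Λ * C) := by rw [← h, hΛinv]
  -- entrywise characterization of M = Qtop M
  have hQt : ∀ M : Matrix (Fin m) (Fin m) ℝ,
      (M = Qtop M) ↔ (∀ i j, i ≠ j → M i j + M j i = 0) := by
    intro M
    constructor
    · intro h i j hij
      have := congrFun (congrFun h i) j
      simp only [Qtop, Qop, Matrix.add_apply, Matrix.smul_apply, Matrix.sub_apply,
        Matrix.transpose_apply, Matrix.diagonal_apply, hij, if_false, smul_eq_mul] at this
      linarith
    · intro h
      funext i j
      by_cases hij : i = j
      · subst hij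
        simp [Qtop, Qop]
      · have := h i j hij
        simp only [Qtop, Qop, Matrix.add_apply, Matrix.smul_apply, Matrix.sub_apply,
          Matrix.transpose_apply, Matrix.diagonal_apply, smul_eq_mul]
        rw [if_neg hij]
        linarith
  -- entrywise characterization of D = Qop D (antisymmetry)
  have hQ : ∀ D : Matrix (Fin m) (Fin m) ℝ,
      (D - Qop D = 0) ↔ (∀ i j, D j i = - D i j) := by
    intro D
    rw [sub_eq_zero]
    constructor
    · intro h i j
      have := congrFun (congrFun h i) j
      simp only [Qop, Matrix.smul_apply, Matrix.sub_apply, Matrix.transpose_apply,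
        smul_eq_mul] at this
      linarith
    · intro h
      funext i j
      have := h i j
      simp only [Qop, Matrix.smul_apply, Matrix.sub_apply, Matrix.transpose_apply, smul_eq_mul]
      linarith
  have key : ∀ C D : Matrix (Fin m) (Fin m) ℝ,
      (C - Λ⁻¹ * Qtop (Λ * C) = 0 ∧ D - Qop D = 0 ∧ Dᵀ + C = G) ↔
        (D = D₀ ∧ C = G - D₀ᵀ) := by
    intro C D
    constructor
    · rintro ⟨h1, h2, h3⟩
      have hC : C = G - Dᵀ := eq_sub_of_add_eq' h3
      have hDas : ∀ i j, D j i = - D i j := (hQ D).mp h2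
      have hM := (hQt (Λ * C)).mp ((hEq1 C).mp h1)
      have hCij : ∀ i j, i ≠ j → lam i * C i j + lam j * C j i = 0 := by
        intro i j hij
        have := hM i j hij
        rwa [Matrix.diagonal_mul, Matrix.diagonal_mul] at this
      have hDeq : D = D₀ := by
        funext i j
        by_cases hij : i = j
        · subst hij
          have h0 : D i i = 0 := by have := hDas i i; linarith
          show D i i = D₀ i i
          simp [D₀, h0]
        · have hc := hCij i j hij
          rw [hC] at hc
          simp only [Matrix.sub_apply, Matrix.transpose_apply] at hc
          have hd := hDas i j
          have hne : lam j - lam i ≠ 0 := sub_ne_zero.mpr fun h => hij (hdist h).symm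
          show D i j = D₀ i j
          simp only [D₀, Matrix.of_apply, if_neg hij]
          rw [eq_div_iff hne]
          rw [hd] at hc
          linear_combination -hc
      exact ⟨hDeq, by rw [hC, hDeq]⟩
    · rintro ⟨hD, hC⟩
      subst hD hC
      have hD₀as : ∀ i j, D₀ j i = - D₀ i j := by
        intro i j
        by_cases hij : i = j
        · subst hij; simp [D₀]
        · have hne : lam j - lam i ≠ 0 := sub_ne_zero.mpr fun h => hij (hdist h).symm
          have hne' : lam i - lam j ≠ 0 := sub_ne_zero.mpr fun h => hij (hdist h)
          simp only [D₀, Matrix.of_apply, if_neg hij, if_neg (Ne.symm hij)]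
          field_simp
          ring
      refine ⟨?_, ?_, by abel⟩
      · rw [hEq1, hQt]
        intro i j hij
        rw [Matrix.diagonal_mul, Matrix.diagonal_mul]
        simp only [Matrix.sub_apply, Matrix.transpose_apply]
        have hdij : D₀ j i = - D₀ i j := hD₀as i j
        have hne : lam j - lam i ≠ 0 := sub_ne_zero.mpr fun h => hij (hdist h).symm
        have hval : D₀ i j = (lam i * G i j + lam j * G j i) / (lam j - lam i) := by
          simp [D₀, if_neg hij]
        rw [hdij, hval]
        field_simp
        ring
      · rw [hQ]
        exact hD₀as
  refine ⟨⟨(G - D₀ᵀ, D₀), (key _ _).mpr ⟨rfl, rfl⟩, ?_⟩, key⟩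
  rintro ⟨C, D⟩ h
  obtain ⟨hD, hC⟩ := (key C D).mp h
  simp [hD, hC]
end

section
/- Let m ≥ 2 and let λ_1, …, λ_m be nonzero real numbers that are NOT pairwise distinct (i.e., λ_i = λ_j for some i ≠ j), and set Λ = diag(λ_1, …, λ_m). Then the homogeneous system C − Λ^{-1} Q̃(ΛC) = 0, D − Q(D) = 0, D^T + C = 0 admits a nontrivial solution (C, D) ≠ (0, 0); consequently, for any G ∈ ℝ^{m×m}, solutions of the system C − Λ^{-1}Q̃(ΛC) = 0, D − Q(D) = 0, D^T + C = G are not unique whenever one exists. -/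
open Matrix

lemma Qop_add {m : ℕ} (A B : Matrix (Fin m) (Fin m) ℝ) : Qop (A + B) = Qop A + Qop B := by
  ext k l; simp [Qop]; ring

lemma Qtop_add {m : ℕ} (A B : Matrix (Fin m) (Fin m) ℝ) : Qtop (A + B) = Qtop A + Qtop B := by
  simp [Qtop, Qop_add]
  ext k l
  by_cases h : k = l <;> simp [Matrix.diagonal, h] <;> abel

/-- If `m ≥ 2` and the nonzero `λ_i` are not pairwise distinct, then the homogeneous DyBO
system has a nontrivial solution; consequently for any `G` solutions of the inhomogeneous
system are not unique whenever one exists. -/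
theorem dybo_CD_system_degenerate {m : ℕ} (hm : 2 ≤ m) (lam : Fin m → ℝ)
    (hnz : ∀ i, lam i ≠ 0) (hrep : ∃ i j : Fin m, i ≠ j ∧ lam i = lam j) :
    let Λ : Matrix (Fin m) (Fin m) ℝ := Matrix.diagonal lam
    (∃ C D : Matrix (Fin m) (Fin m) ℝ,
        (C - Λ⁻¹ * Qtop (Λ * C) = 0 ∧ D - Qop D = 0 ∧ Dᵀ + C = 0) ∧ (C, D) ≠ (0, 0)) ∧
    (∀ G : Matrix (Fin m) (Fin m) ℝ,
        (∃ C D : Matrix (Fin m) (Fin m) ℝ,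
            C - Λ⁻¹ * Qtop (Λ * C) = 0 ∧ D - Qop D = 0 ∧ Dᵀ + C = G) →
        ∃ C D C' D' : Matrix (Fin m) (Fin m) ℝ,
          (C - Λ⁻¹ * Qtop (Λ * C) = 0 ∧ D - Qop D = 0 ∧ Dᵀ + C = G) ∧
          (C' - Λ⁻¹ * Qtop (Λ * C') = 0 ∧ D' - Qop D' = 0 ∧ D'ᵀ + C' = G) ∧
          (C, D) ≠ (C', D')) := by
  intro Λ
  obtain ⟨i, j, hij, hlam⟩ := hrep
  set C0 : Matrix (Fin m) (Fin m) ℝ :=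
    Matrix.single i j 1 - Matrix.single j i 1 with hC0
  have hC0t : C0ᵀ = -C0 := by
    ext k l
    simp [hC0, Matrix.single, and_comm]
  have hC0ne : C0 ≠ 0 := by
    intro h
    have := congrFun (congrFun h i) j
    simp [hC0, Matrix.single, hij] at this
  have hdet : IsUnit Λ.det := by
    simp only [Λ, Matrix.det_diagonal]
    exact (Finset.prod_ne_zero_iff.2 fun k _ => hnz k).isUnit
  -- key: Qtop (Λ * C0) = Λ * C0
  have hQ : Qtop (Λ * C0) = Λ * C0 := by
    ext k l
    simp only [Qtop, Qop, Matrix.add_apply, Matrix.smul_apply, Matrix.sub_apply,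
      Matrix.transpose_apply, Matrix.diagonal_apply, hC0, Λ,
      Matrix.diagonal_mul, Matrix.single, Matrix.of_apply]
    by_cases hkl : k = l
    · subst hkl
      by_cases h1 : k = i <;> by_cases h2 : k = j <;>
        simp_all <;> ring
    · simp only [hkl, if_neg hkl]
      by_cases h1 : k = i ∧ l = j
      · obtain ⟨rfl, rfl⟩ := h1
        simp [hij, hij.symm, hlam]
        ring
      · by_cases h2 : k = j ∧ l = i
        · obtain ⟨rfl, rfl⟩ := h2
          simp [hij, hij.symm, hlam]
          ring
        · push_neg at h1 h2
          have e1 : ¬(i = k ∧ j = l) := fun ⟨a,b⟩ => h1 a.symm b.symm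
          have e2 : ¬(j = k ∧ i = l) := fun ⟨a,b⟩ => h2 a.symm b.symm
          have e3 : ¬(i = l ∧ j = k) := fun ⟨a,b⟩ => h2 b.symm a.symm
          have e4 : ¬(j = l ∧ i = k) := fun ⟨a,b⟩ => h1 b.symm a.symm
          simp [e1, e2, e3, e4]
  have heq1 : C0 - Λ⁻¹ * Qtop (Λ * C0) = 0 := by
    rw [hQ, ← Matrix.mul_assoc, Matrix.nonsing_inv_mul _ hdet, Matrix.one_mul, sub_self]
  have heq2 : C0 - Qop C0 = 0 := by
    rw [Qop, hC0t]
    ext k l; simp; ring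
  constructor
  · refine ⟨C0, C0, ⟨heq1, heq2, ?_⟩, ?_⟩
    · rw [hC0t]; simp
    · simp [Prod.ext_iff, hC0ne]
  · rintro G ⟨C1, D1, h1, h2, h3⟩
    refine ⟨C1, D1, C1 + C0, D1 + C0, ⟨h1, h2, h3⟩, ⟨?_, ?_, ?_⟩, ?_⟩
    · rw [Matrix.mul_add, Qtop_add, Matrix.mul_add]
      have : C1 + C0 - (Λ⁻¹ * Qtop (Λ * C1) + Λ⁻¹ * Qtop (Λ * C0)) =
          (C1 - Λ⁻¹ * Qtop (Λ * C1)) + (C0 - Λ⁻¹ * Qtop (Λ * C0)) := by abel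
      rw [this, h1, heq1, add_zero]
    · rw [Qop_add]
      have : D1 + C0 - (Qop D1 + Qop C0) = (D1 - Qop D1) + (C0 - Qop C0) := by abel
      rw [this, h2, heq2, add_zero]
    · rw [transpose_add, hC0t]
      calc D1ᵀ + -C0 + (C1 + C0) = D1ᵀ + C1 := by abel
        _ = G := h3
    · simp only [ne_eq, Prod.mk.injEq, not_and]
      intro h
      exact absurd (left_eq_add.mp h) hC0ne
end
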